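/- arXiv:1405.1235 — 2 statements merged into one kernel-verified Lean document; each statement's English description precedes it below -/
import Mathlib

section
/- Let x and y be positive semidefinite n×n complex matrices and let f : ℝ≥0 → ℝ≥0 be a continuous increasing convex function with f(0) = 0. Then trace(f(x)) + trace(f(y)) ≤ trace(f(x + y)), where f is applied via the functional calculus. -/
open Matrix
open scoped NNReal ComplexOrder

lemma hermSmul {n : ℕ} (r : ℝ) {A : Matrix (Fin n) (Fin n) ℂ} (h : A.IsHermitian) :
    (r • A).IsHermitian := by
  unfold Matrix.IsHermitian at *
  rw [Matrix.conjTranspose_smul, h, star_trivial]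

lemma hermSum {n m : ℕ} (A : Fin m → Matrix (Fin n) (Fin n) ℂ)
    (h : ∀ j, (A j).IsHermitian) : (∑ j, A j).IsHermitian := by
  unfold Matrix.IsHermitian at *
  rw [Matrix.conjTranspose_sum]
  exact Finset.sum_congr rfl fun j _ => h j

/-- `traceRpow p a ha = trace (a ^ p)` for a Hermitian matrix `a`, computed by
functional calculus: the sum of the `p`-th powers of the eigenvalues of `a`. -/
noncomputable def traceRpow {n : ℕ} (p : ℝ) (a : Matrix (Fin n) (Fin n) ℂ)
    (ha : a.IsHermitian) : ℝ := ∑ i, (ha.eigenvalues i) ^ p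

/-- `schatten p x = trace ((xᴴ * x) ^ (p / 2)) = trace (|x| ^ p) = ‖x‖_p ^ p`,
the `p`-th power of the Schatten `p`-(quasi-)norm. -/
noncomputable def schatten {m : ℕ} (p : ℝ) (x : Matrix (Fin m) (Fin m) ℂ) : ℝ :=
  traceRpow (p / 2) (xᴴ * x) (Matrix.isHermitian_conjTranspose_mul_self x)

/-- `traceF f a ha = trace (f a)` for a Hermitian matrix `a`, where `f : ℝ≥0 → ℝ≥0` is
applied to the eigenvalues of `a` via functional calculus. -/
noncomputable def traceF {n : ℕ} (f : ℝ≥0 → ℝ≥0) (a : Matrix (Fin n) (Fin n) ℂ)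
    (ha : a.IsHermitian) : ℝ := ∑ i, (f (ha.eigenvalues i).toNNReal : ℝ)

/-!
Write `x = a * a` and `y = b * b` with `a`, `b` Hermitian and let `T` be the column `(a; b)`.
Then `Tᴴ * T = x + y`, while `T * Tᴴ` is the block matrix `[[x, a * b], [b * a, y]]`; the two have
the same nonzero eigenvalues, so `f 0 = 0` gives `tr f(x + y) = tr f(T * Tᴴ)`. The block diagonal
part `[[x, 0], [0, y]]` of `T * Tᴴ` is the average of `T * Tᴴ` and its conjugate by
`[[1, 0], [0, -1]]`, so `tr f(x) + tr f(y) ≤ tr f(T * Tᴴ)` by convexity of `A ↦ tr f(A)`. That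
convexity comes from the diagonal of a Hermitian matrix being the image of its eigenvalues under
the doubly stochastic matrix `(‖U i j‖ ^ 2)`, `U` a unitary diagonalising it.
-/

namespace Matrix

variable {𝕜 : Type*} [RCLike 𝕜] {m n : Type*} [Fintype m] [DecidableEq m] [Fintype n]
  [DecidableEq n]

open scoped MatrixOrder in
lemma PosSemidef.exists_isHermitian_mul_self_eq {A : Matrix n n 𝕜} (hA : A.PosSemidef) :
    ∃ S : Matrix n n 𝕜, S.IsHermitian ∧ S * S = A :=
  ⟨CFC.sqrt A, (CFC.sqrt_nonneg A).posSemidef.1, CFC.sqrt_mul_sqrt_self A hA.nonneg⟩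

lemma sum_norm_sq_row_eq_one_of_mem_unitaryGroup {U : Matrix n n 𝕜}
    (hU : U ∈ unitaryGroup n 𝕜) (i : n) : ∑ j, ‖U i j‖ ^ 2 = 1 := by
  have h := congrFun (congrFun (mem_unitaryGroup_iff.mp hU) i) i
  simp only [mul_apply, star_apply, RCLike.star_def, RCLike.mul_conj, one_apply_eq] at h
  exact_mod_cast h

lemma sum_norm_sq_col_eq_one_of_mem_unitaryGroup {U : Matrix n n 𝕜}
    (hU : U ∈ unitaryGroup n 𝕜) (j : n) : ∑ i, ‖U i j‖ ^ 2 = 1 := by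
  have h := congrFun (congrFun (mem_unitaryGroup_iff'.mp hU) j) j
  simp only [mul_apply, star_apply, RCLike.star_def, RCLike.conj_mul, one_apply_eq] at h
  exact_mod_cast h

namespace IsHermitian

lemma sum_eigenvalues_congr {A B : Matrix n n 𝕜} (hA : A.IsHermitian) (hB : B.IsHermitian)
    (h : A = B) (g : ℝ → ℝ) : ∑ i, g (hA.eigenvalues i) = ∑ i, g (hB.eigenvalues i) := by
  subst h; rfl

lemma sum_eigenvalues_eq_sum_roots_charpoly {A : Matrix n n 𝕜} (hA : A.IsHermitian) (g : ℝ → ℝ) :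
    ∑ i, g (hA.eigenvalues i) = (A.charpoly.roots.map (g ∘ RCLike.re)).sum := by
  simp [hA.roots_charpoly_eq_eigenvalues, Multiset.map_map]

lemma sum_eigenvalues_fromBlocks {A : Matrix m m 𝕜} {D : Matrix n n 𝕜} (hA : A.IsHermitian)
    (hD : D.IsHermitian) (hAD : (Matrix.fromBlocks A 0 0 D).IsHermitian) (g : ℝ → ℝ) :
    ∑ i, g (hAD.eigenvalues i) = ∑ i, g (hA.eigenvalues i) + ∑ i, g (hD.eigenvalues i) := by
  rw [hA.sum_eigenvalues_eq_sum_roots_charpoly, hD.sum_eigenvalues_eq_sum_roots_charpoly,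
    hAD.sum_eigenvalues_eq_sum_roots_charpoly, charpoly_fromBlocks_zero₁₂,
    Polynomial.roots_mul ((charpoly_monic A).mul (charpoly_monic D)).ne_zero, Multiset.map_add,
    Multiset.sum_add]

lemma eigenvalues_conjTranspose_mul_mul_of_mem_unitaryGroup {A U : Matrix n n 𝕜}
    (hA : A.IsHermitian) (hU : U ∈ unitaryGroup n 𝕜) (hUAU : (Uᴴ * A * U).IsHermitian) :
    hUAU.eigenvalues = hA.eigenvalues := by
  rw [eigenvalues_eq_eigenvalues_iff, Matrix.mul_assoc, charpoly_mul_comm, Matrix.mul_assoc,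
    ← star_eq_conjTranspose, mem_unitaryGroup_iff.mp hU, Matrix.mul_one]

end IsHermitian

lemma sum_eigenvalues_mul_conjTranspose_self (T : Matrix m n 𝕜) {g : ℝ → ℝ} (hg : g 0 = 0) :
    ∑ i, g ((isHermitian_mul_conjTranspose_self T).eigenvalues i) =
      ∑ j, g ((isHermitian_conjTranspose_mul_self T).eigenvalues j) := by
  have h := congrArg (fun p => (p.roots.map (g ∘ RCLike.re)).sum) (charpoly_mul_comm' T Tᴴ)
  simp only [Polynomial.roots_mul ((Polynomial.monic_X_pow _).mul (charpoly_monic _)).ne_zero,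
    Polynomial.roots_X_pow, Multiset.map_add, Multiset.sum_add, Multiset.map_nsmul,
    Multiset.sum_nsmul, Multiset.map_singleton, Multiset.sum_singleton, Function.comp_apply,
    map_zero, hg, smul_zero, zero_add] at h
  rw [IsHermitian.sum_eigenvalues_eq_sum_roots_charpoly,
    IsHermitian.sum_eigenvalues_eq_sum_roots_charpoly]
  exact h

namespace IsHermitian

lemma re_apply_self_eq_sum_eigenvalues {A : Matrix n n 𝕜} (hA : A.IsHermitian) (i : n) :
    RCLike.re (A i i) =
      ∑ j, ‖(hA.eigenvectorUnitary : Matrix n n 𝕜) i j‖ ^ 2 * hA.eigenvalues j := by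
  conv_lhs => rw [hA.spectral_theorem, Unitary.conjStarAlgAut_apply, mul_apply, map_sum]
  refine Finset.sum_congr rfl fun j _ => ?_
  rw [mul_diagonal, star_apply, RCLike.star_def, mul_right_comm, RCLike.mul_conj,
    Function.comp_apply, ← RCLike.ofReal_pow, ← RCLike.ofReal_mul, RCLike.ofReal_re]

lemma re_apply_self_mem_of_convex {A : Matrix n n 𝕜} (hA : A.IsHermitian) {s : Set ℝ}
    (hs : Convex ℝ s) (hAs : ∀ j, hA.eigenvalues j ∈ s) (i : n) : RCLike.re (A i i) ∈ s := by
  rw [hA.re_apply_self_eq_sum_eigenvalues]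
  exact hs.sum_mem (fun j _ => by positivity)
    (sum_norm_sq_row_eq_one_of_mem_unitaryGroup hA.eigenvectorUnitary.2 i) (fun j _ => hAs j)

lemma sum_re_apply_self_le_of_convexOn {A : Matrix n n 𝕜} (hA : A.IsHermitian) {s : Set ℝ}
    {g : ℝ → ℝ} (hg : ConvexOn ℝ s g) (hAs : ∀ j, hA.eigenvalues j ∈ s) :
    ∑ i, g (RCLike.re (A i i)) ≤ ∑ j, g (hA.eigenvalues j) := by
  set w : n → n → ℝ := fun i j => ‖(hA.eigenvectorUnitary : Matrix n n 𝕜) i j‖ ^ 2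
  have hU := hA.eigenvectorUnitary.2
  calc ∑ i, g (RCLike.re (A i i)) ≤ ∑ i, ∑ j, w i j * g (hA.eigenvalues j) := by
        refine Finset.sum_le_sum fun i _ => ?_
        rw [hA.re_apply_self_eq_sum_eigenvalues]
        exact hg.map_sum_le (fun j _ => by positivity)
          (sum_norm_sq_row_eq_one_of_mem_unitaryGroup hU i) (fun j _ => hAs j)
    _ = ∑ j, (∑ i, w i j) * g (hA.eigenvalues j) := by
        rw [Finset.sum_comm]; simp only [Finset.sum_mul]
    _ = ∑ j, g (hA.eigenvalues j) := by
        simp only [w, sum_norm_sq_col_eq_one_of_mem_unitaryGroup hU, one_mul]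

theorem sum_eigenvalues_smul_add_le_of_convexOn {A B : Matrix n n 𝕜} (hA : A.IsHermitian)
    (hB : B.IsHermitian) {a b : ℝ} (ha : 0 ≤ a) (hb : 0 ≤ b) (hab : a + b = 1)
    (hC : (a • A + b • B).IsHermitian) {s : Set ℝ} {g : ℝ → ℝ} (hg : ConvexOn ℝ s g)
    (hAs : ∀ j, hA.eigenvalues j ∈ s) (hBs : ∀ j, hB.eigenvalues j ∈ s) :
    ∑ i, g (hC.eigenvalues i) ≤
      a * ∑ i, g (hA.eigenvalues i) + b * ∑ i, g (hB.eigenvalues i) := by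
  set V : Matrix n n 𝕜 := (hC.eigenvectorUnitary : Matrix n n 𝕜)
  have hV : V ∈ unitaryGroup n 𝕜 := hC.eigenvectorUnitary.2
  have hVA := isHermitian_conjTranspose_mul_mul V hA
  have hVB := isHermitian_conjTranspose_mul_mul V hB
  have hVAs : ∀ j, hVA.eigenvalues j ∈ s := by
    rwa [hA.eigenvalues_conjTranspose_mul_mul_of_mem_unitaryGroup hV]
  have hVBs : ∀ j, hVB.eigenvalues j ∈ s := by
    rwa [hB.eigenvalues_conjTranspose_mul_mul_of_mem_unitaryGroup hV]
  have hCdiag : ∀ i, hC.eigenvalues i =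
      a * RCLike.re ((Vᴴ * A * V) i i) + b * RCLike.re ((Vᴴ * B * V) i i) := by
    intro i
    have h := congrFun (congrFun hC.conjStarAlgAut_star_eigenvectorUnitary i) i
    simp only [Unitary.conjStarAlgAut_apply, Matrix.mul_add, Matrix.add_mul, Matrix.mul_smul,
      Matrix.smul_mul] at h
    simpa [V, star_eq_conjTranspose, RCLike.smul_re] using (congrArg RCLike.re h).symm
  calc ∑ i, g (hC.eigenvalues i)
      ≤ ∑ i, (a * g (RCLike.re ((Vᴴ * A * V) i i)) + b * g (RCLike.re ((Vᴴ * B * V) i i))) := by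
        refine Finset.sum_le_sum fun i _ => ?_
        rw [hCdiag]
        exact hg.2 (hVA.re_apply_self_mem_of_convex hg.1 hVAs i)
          (hVB.re_apply_self_mem_of_convex hg.1 hVBs i) ha hb hab
    _ = a * ∑ i, g (RCLike.re ((Vᴴ * A * V) i i)) + b * ∑ i, g (RCLike.re ((Vᴴ * B * V) i i)) := by
        rw [Finset.sum_add_distrib, Finset.mul_sum, Finset.mul_sum]
    _ ≤ a * ∑ i, g (hVA.eigenvalues i) + b * ∑ i, g (hVB.eigenvalues i) :=
        add_le_add (mul_le_mul_of_nonneg_left (hVA.sum_re_apply_self_le_of_convexOn hg hVAs) ha)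
          (mul_le_mul_of_nonneg_left (hVB.sum_re_apply_self_le_of_convexOn hg hVBs) hb)
    _ = a * ∑ i, g (hA.eigenvalues i) + b * ∑ i, g (hB.eigenvalues i) := by
        rw [hA.eigenvalues_conjTranspose_mul_mul_of_mem_unitaryGroup hV,
          hB.eigenvalues_conjTranspose_mul_mul_of_mem_unitaryGroup hV]

theorem sum_eigenvalues_add_le_fromBlocks_of_convexOn {A : Matrix m m 𝕜} {B : Matrix m n 𝕜}
    {C : Matrix n m 𝕜} {D : Matrix n n 𝕜} (hM : (Matrix.fromBlocks A B C D).IsHermitian)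
    (hA : A.IsHermitian) (hD : D.IsHermitian) {s : Set ℝ} {g : ℝ → ℝ} (hg : ConvexOn ℝ s g)
    (hMs : ∀ i, hM.eigenvalues i ∈ s) :
    ∑ i, g (hA.eigenvalues i) + ∑ i, g (hD.eigenvalues i) ≤ ∑ i, g (hM.eigenvalues i) := by
  set S : Matrix (m ⊕ n) (m ⊕ n) 𝕜 := Matrix.fromBlocks 1 0 0 (-1)
  have hSS : Sᴴ = S := by simp [S, fromBlocks_conjTranspose]
  have hS : S ∈ unitaryGroup (m ⊕ n) 𝕜 := by
    rw [mem_unitaryGroup_iff, star_eq_conjTranspose, hSS]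
    simp [S, fromBlocks_multiply]
  have hSMS := isHermitian_conjTranspose_mul_mul S hM
  have hAD := hA.fromBlocks (B := 0) (C := 0) conjTranspose_zero hD
  have hpinch : Matrix.fromBlocks A 0 0 D = (2⁻¹ : ℝ) • Matrix.fromBlocks A B C D +
      (2⁻¹ : ℝ) • (Sᴴ * Matrix.fromBlocks A B C D * S) := by
    rw [hSS]
    norm_num [S, fromBlocks_multiply, fromBlocks_smul, fromBlocks_add, ← add_smul]
  calc ∑ i, g (hA.eigenvalues i) + ∑ i, g (hD.eigenvalues i)
      = ∑ i, g (hAD.eigenvalues i) := (hA.sum_eigenvalues_fromBlocks hD hAD g).symm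
    _ = ∑ i, g ((hpinch ▸ hAD).eigenvalues i) := sum_eigenvalues_congr _ _ hpinch g
    _ ≤ 2⁻¹ * ∑ i, g (hM.eigenvalues i) + 2⁻¹ * ∑ i, g (hSMS.eigenvalues i) :=
        hM.sum_eigenvalues_smul_add_le_of_convexOn hSMS (by norm_num) (by norm_num) (by norm_num)
          _ hg hMs (by rwa [hM.eigenvalues_conjTranspose_mul_mul_of_mem_unitaryGroup hS])
    _ = ∑ i, g (hM.eigenvalues i) := by
        rw [hM.eigenvalues_conjTranspose_mul_mul_of_mem_unitaryGroup hS]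
        ring

end IsHermitian

end Matrix

lemma NNReal.convexOn_coe_comp_toNNReal {f : ℝ≥0 → ℝ≥0} (hf : ConvexOn ℝ≥0 Set.univ f) :
    ConvexOn ℝ (Set.Ici 0) fun t : ℝ => (f t.toNNReal : ℝ) := by
  refine ⟨convex_Ici 0, fun x hx y hy a b ha hb hab => ?_⟩
  lift x to ℝ≥0 using hx
  lift y to ℝ≥0 using hy
  lift a to ℝ≥0 using ha
  lift b to ℝ≥0 using hb
  have h := hf.2 (Set.mem_univ x) (Set.mem_univ y) a.2 b.2 (by exact_mod_cast hab)
  simpa only [smul_eq_mul, ← NNReal.coe_mul, ← NNReal.coe_add, Real.toNNReal_coe,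
    NNReal.coe_le_coe] using h

theorem trace_superadditive_general {n : ℕ} (x y : Matrix (Fin n) (Fin n) ℂ)
    (hx : x.PosSemidef) (hy : y.PosSemidef) (f : ℝ≥0 → ℝ≥0)
    (hconv : ConvexOn ℝ≥0 Set.univ f)
    (hf0 : f 0 = 0) :
    traceF f x hx.1 + traceF f y hy.1 ≤ traceF f (x + y) (hx.1.add hy.1) := by
  set g : ℝ → ℝ := fun t => (f t.toNNReal : ℝ)
  obtain ⟨a, ha, hax⟩ := hx.exists_isHermitian_mul_self_eq
  obtain ⟨b, hb, hby⟩ := hy.exists_isHermitian_mul_self_eq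
  set T := fromRows a b
  have hTTh : T * Tᴴ = fromBlocks x (a * b) (b * a) y := by
    rw [conjTranspose_fromRows_eq_fromCols_conjTranspose, fromRows_mul_fromCols, ha.eq, hb.eq,
      hax, hby]
  have hThT : Tᴴ * T = x + y := by
    rw [conjTranspose_fromRows_eq_fromCols_conjTranspose, fromCols_mul_fromRows, ha.eq, hb.eq,
      hax, hby]
  have hM : (fromBlocks x (a * b) (b * a) y).PosSemidef :=
    hTTh ▸ posSemidef_self_mul_conjTranspose T
  calc traceF f x hx.1 + traceF f y hy.1 ≤ ∑ i, g (hM.1.eigenvalues i) :=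
        hM.1.sum_eigenvalues_add_le_fromBlocks_of_convexOn hx.1 hy.1
          (NNReal.convexOn_coe_comp_toNNReal hconv) hM.eigenvalues_nonneg
    _ = ∑ i, g ((isHermitian_mul_conjTranspose_self T).eigenvalues i) :=
        IsHermitian.sum_eigenvalues_congr _ _ hTTh.symm g
    _ = ∑ i, g ((isHermitian_conjTranspose_mul_self T).eigenvalues i) :=
        sum_eigenvalues_mul_conjTranspose_self T (by simp [g, hf0])
    _ = traceF f (x + y) (hx.1.add hy.1) := IsHermitian.sum_eigenvalues_congr _ _ hThT g

/-- Superadditivity of the trace of a convex function: for positive semidefinite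
`x, y` and continuous increasing convex `f : ℝ≥0 → ℝ≥0` with `f 0 = 0`,
`trace f(x) + trace f(y) ≤ trace f(x + y)`. -/
theorem trace_superadditive {n : ℕ} (x y : Matrix (Fin n) (Fin n) ℂ)
    (hx : x.PosSemidef) (hy : y.PosSemidef) (f : ℝ≥0 → ℝ≥0)
    (hcont : Continuous f) (hmono : Monotone f) (hconv : ConvexOn ℝ≥0 Set.univ f)
    (hf0 : f 0 = 0) :
    traceF f x hx.1 + traceF f y hy.1 ≤ traceF f (x + y) (hx.1.add hy.1) :=
  trace_superadditive_general x y hx hy f hconv hf0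
end

section
/- Let x and y be n×n complex matrices and let 0 < p ≤ 2. Then 2^{p−1}(‖x‖_p^p + ‖y‖_p^p) ≤ ‖x+y‖_p^p + ‖x−y‖_p^p ≤ 2(‖x‖_p^p + ‖y‖_p^p), where ‖x‖_p^p = trace(|x|^p) = ∑_i s_i(x)^p is the sum of p-th powers of the singular values of x. -/
/-!
With `r = p / 2 ∈ (0, 1]` one has `‖x‖ₚᵖ = tr (xᴴx) ^ r`, and the parallelogram law
`(x+y)ᴴ(x+y) + (x-y)ᴴ(x-y) = 2 (xᴴx + yᴴy)` reduces the right-hand inequality to two trace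
inequalities for positive matrices: `tr C ^ r + tr D ^ r ≤ 2 tr ((C + D) / 2) ^ r`, by operator
concavity of `t ↦ t ^ r`, and the subadditivity `tr (A + B) ^ r ≤ tr A ^ r + tr B ^ r`. For the
latter, `t ^ r` is a positive mixture of the functions `t / (s + t)`, `s > 0`, and for each of them
`tr A (s + A + B)⁻¹ ≤ tr A (s + A)⁻¹` because inversion is operator antitone. The left-hand
inequality is the right-hand one applied to `x + y` and `x - y`, since `‖2x‖ₚᵖ = 2ᵖ ‖x‖ₚᵖ`.
-/

open Matrix
open scoped NNReal ComplexOrder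

open scoped Matrix.Norms.L2Operator MatrixOrder
open Set

universe u

open MeasureTheory in
lemma Real.sum_rpow_le_sum_rpow_of_sum_div_add_le {κ κ' : Type u} [Fintype κ] [Fintype κ']
    {a : κ → ℝ} {b : κ' → ℝ} (ha : ∀ i, 0 ≤ a i) (hb : ∀ j, 0 ≤ b j) {r : ℝ}
    (hr : r ∈ Ioo 0 1) (h : ∀ t, 0 < t → ∑ i, a i / (t + a i) ≤ ∑ j, b j / (t + b j)) :
    ∑ i, a i ^ r ≤ ∑ j, b j ^ r := by
  obtain ⟨μ, hμ⟩ := exists_measure_rpow_eq_integral_rpowIntegrand₀₁ hr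
  have sum_rpow_eq {ν : Type u} [Fintype ν] (c : ν → ℝ) (hc : ∀ i, 0 ≤ c i) :
      ∑ i, c i ^ r = ∫ t in Ioi 0, ∑ i, rpowIntegrand₀₁ r t (c i) ∂μ := by
    rw [integral_finsetSum _ fun i _ => (hμ _ (hc i)).1]
    exact Finset.sum_congr rfl fun i _ => (hμ _ (hc i)).2
  rw [sum_rpow_eq a ha, sum_rpow_eq b hb]
  refine setIntegral_mono_on (integrable_finsetSum _ fun i _ => (hμ _ (ha i)).1)
    (integrable_finsetSum _ fun j _ => (hμ _ (hb j)).1) measurableSet_Ioi fun t ht => ?_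
  simp only [rpowIntegrand₀₁_eq_pow_div hr (le_of_lt ht) (ha _),
    rpowIntegrand₀₁_eq_pow_div hr (le_of_lt ht) (hb _), mul_div_assoc, ← Finset.mul_sum]
  exact mul_le_mul_of_nonneg_left (h t ht) (Real.rpow_nonneg (le_of_lt ht) _)

namespace Matrix

variable {ι : Type*} [Fintype ι]

lemma monotone_re_trace : Monotone fun A : Matrix ι ι ℂ => A.trace.re := fun A B h => by
  have := (le_iff.mp h).trace_nonneg
  rw [trace_sub, sub_nonneg] at this
  exact (Complex.le_def.mp this).1

variable [DecidableEq ι]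

lemma monotone_re_trace_mul {A : Matrix ι ι ℂ} (hA : 0 ≤ A) :
    Monotone fun X : Matrix ι ι ℂ => (A * X).trace.re := fun X Y h => by
  have conj_sqrt (Z : Matrix ι ι ℂ) : (A * Z).trace = (CFC.sqrt A * Z * CFC.sqrt A).trace := by
    rw [trace_mul_cycle, CFC.sqrt_mul_sqrt_self A hA]
  simp only [conj_sqrt]
  apply monotone_re_trace
  simpa only [(CFC.sqrt_nonneg A).isSelfAdjoint.star_eq] using
    star_left_conjugate_le_conjugate h (CFC.sqrt A)

lemma re_trace_cfc {A : Matrix ι ι ℂ} (hA : A.IsHermitian) (f : ℝ → ℝ) :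
    (cfc f A).trace.re = ∑ i, f (hA.eigenvalues i) := by
  rw [hA.cfc_eq, IsHermitian.cfc, Unitary.conjStarAlgAut_apply, trace_mul_cycle,
    Unitary.coe_star_mul_self, one_mul, trace_diagonal, Complex.re_sum]
  simp

lemma re_trace_rpow {M : Matrix ι ι ℂ} (hM : M.PosSemidef) (r : ℝ) :
    (M ^ r).trace.re = ∑ i, hM.isHermitian.eigenvalues i ^ r := by
  rw [CFC.rpow_eq_cfc_real hM.nonneg, re_trace_cfc]

lemma smul_rpow {M : Matrix ι ι ℂ} (hM : 0 ≤ M) {c : ℝ} (hc : 0 ≤ c) (r : ℝ) :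
    (c • M) ^ r = c ^ r • M ^ r := by
  rw [CFC.rpow_eq_cfc_real (smul_nonneg hc hM), CFC.rpow_eq_cfc_real hM,
    ← cfc_comp_smul c _ M ((M.finite_real_spectrum.image _).continuousOn _),
    ← cfc_smul (c ^ r) _ M (M.finite_real_spectrum.continuousOn _)]
  refine cfc_congr fun x hx => ?_
  simp [Real.mul_rpow hc (spectrum_nonneg_of_nonneg hM hx)]

lemma re_trace_rpow_add_rpow_le {C D : Matrix ι ι ℂ} (hC : 0 ≤ C) (hD : 0 ≤ D) {r : ℝ}
    (hr : r ∈ Icc 0 1) :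
    (C ^ r).trace.re + (D ^ r).trace.re ≤ 2 * (((1 / 2 : ℝ) • (C + D)) ^ r).trace.re := by
  have h := monotone_re_trace <| (CFC.concaveOn_rpow hr).2 hC hD
    (by norm_num : (0 : ℝ) ≤ 1 / 2) (by norm_num : (0 : ℝ) ≤ 1 / 2) (by norm_num)
  simp only [smul_add, trace_add, trace_smul, Complex.add_re, Complex.smul_re,
    smul_eq_mul] at h ⊢
  linarith

lemma cfc_inv_const_add {M : Matrix ι ι ℂ} (hM : 0 ≤ M) {t : ℝ} (ht : 0 < t) :
    cfc (fun x => (t + x)⁻¹) M = Ring.inverse (algebraMap ℝ _ t + M) := by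
  rw [cfc_inv _ M (fun x hx => ?_) (M.finite_real_spectrum.continuousOn _),
    cfc_const_add t (fun x => x) M, cfc_id' ℝ M]
  have := spectrum_nonneg_of_nonneg hM hx
  positivity

lemma cfc_div_const_add {M : Matrix ι ι ℂ} (hM : IsSelfAdjoint M) (t : ℝ) :
    cfc (fun x => x / (t + x)) M = M * cfc (fun x => (t + x)⁻¹) M := by
  simp_rw [div_eq_mul_inv]
  rw [cfc_mul _ _ M (M.finite_real_spectrum.continuousOn _)
    (M.finite_real_spectrum.continuousOn _), cfc_id' ℝ M]

lemma re_trace_cfc_div_const_add_add_le {A B : Matrix ι ι ℂ} (hA : 0 ≤ A) (hB : 0 ≤ B)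
    {t : ℝ} (ht : 0 < t) :
    (cfc (fun x => x / (t + x)) (A + B)).trace.re ≤
      (cfc (fun x => x / (t + x)) A).trace.re + (cfc (fun x => x / (t + x)) B).trace.re := by
  have hT := add_nonneg hA hB
  have resolvent_antitone (C : Matrix ι ι ℂ) (hC : 0 ≤ C) (hCT : C ≤ A + B) :
      cfc (fun x => (t + x)⁻¹) (A + B) ≤ cfc (fun x => (t + x)⁻¹) C := by
    rw [cfc_inv_const_add hC ht, cfc_inv_const_add hT ht]
    exact CStarAlgebra.ringInverse_le_ringInverse (by gcongr)
      ((isStrictlyPositive_algebraMap ht).add_nonneg hC)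
  rw [cfc_div_const_add hT.isSelfAdjoint, cfc_div_const_add hA.isSelfAdjoint,
    cfc_div_const_add hB.isSelfAdjoint, add_mul, trace_add, Complex.add_re]
  exact add_le_add
    (monotone_re_trace_mul hA (resolvent_antitone A hA (le_add_of_nonneg_right hB)))
    (monotone_re_trace_mul hB (resolvent_antitone B hB (le_add_of_nonneg_left hA)))

lemma re_trace_rpow_add_le {A B : Matrix ι ι ℂ} (hA : 0 ≤ A) (hB : 0 ≤ B) {r : ℝ}
    (hr : r ∈ Icc 0 1) :
    ((A + B) ^ r).trace.re ≤ (A ^ r).trace.re + (B ^ r).trace.re := by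
  have hT := add_nonneg hA hB
  obtain rfl | hr0 := hr.1.eq_or_lt
  · simp [CFC.rpow_zero _ hA, CFC.rpow_zero _ hB, CFC.rpow_zero _ hT]
  obtain rfl | hr1 := hr.2.eq_or_lt
  · simp [CFC.rpow_one _ hA, CFC.rpow_one _ hB, CFC.rpow_one _ hT]
  have hA' := nonneg_iff_posSemidef.mp hA
  have hB' := nonneg_iff_posSemidef.mp hB
  have hT' := nonneg_iff_posSemidef.mp hT
  rw [re_trace_rpow hA', re_trace_rpow hB', re_trace_rpow hT']
  refine (Real.sum_rpow_le_sum_rpow_of_sum_div_add_le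
    (b := Sum.elim hA'.1.eigenvalues hB'.1.eigenvalues) hT'.eigenvalues_nonneg
    (Sum.rec hA'.eigenvalues_nonneg hB'.eigenvalues_nonneg) ⟨hr0, hr1⟩
    fun t ht => ?_).trans_eq (Fintype.sum_sum_type _)
  simpa only [Fintype.sum_sum_type, Sum.elim_inl, Sum.elim_inr, re_trace_cfc hT'.1,
    re_trace_cfc hA'.1, re_trace_cfc hB'.1] using re_trace_cfc_div_const_add_add_le hA hB ht

end Matrix

lemma schatten_eq_re_trace_rpow {m : ℕ} (p : ℝ) (x : Matrix (Fin m) (Fin m) ℂ) :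
    schatten p x = ((xᴴ * x) ^ (p / 2)).trace.re :=
  (re_trace_rpow (posSemidef_conjTranspose_mul_self x) _).symm

lemma schatten_smul {m : ℕ} (p : ℝ) (c : ℂ) (x : Matrix (Fin m) (Fin m) ℂ) :
    schatten p (c • x) = ‖c‖ ^ p * schatten p x := by
  have hc : (c • x)ᴴ * (c • x) = (‖c‖ ^ 2 : ℝ) • (xᴴ * x) := by
    rw [conjTranspose_smul, smul_mul_smul_comm, Complex.star_def, Complex.conj_mul',
      ← Complex.coe_smul]
    norm_cast
  rw [schatten_eq_re_trace_rpow, schatten_eq_re_trace_rpow, hc,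
    smul_rpow (posSemidef_conjTranspose_mul_self x).nonneg (by positivity), trace_smul,
    Complex.smul_re, smul_eq_mul, ← Real.rpow_natCast, ← Real.rpow_mul (norm_nonneg c)]
  ring_nf

lemma schatten_add_add_schatten_sub_le {m : ℕ} (x y : Matrix (Fin m) (Fin m) ℂ) {p : ℝ}
    (hp0 : 0 ≤ p) (hp2 : p ≤ 2) :
    schatten p (x + y) + schatten p (x - y) ≤ 2 * (schatten p x + schatten p y) := by
  have hr : p / 2 ∈ Icc (0 : ℝ) 1 := ⟨by linarith, by linarith⟩
  have parallelogram :
      (1 / 2 : ℝ) • ((x + y)ᴴ * (x + y) + (x - y)ᴴ * (x - y)) = xᴴ * x + yᴴ * y := by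
    simp only [conjTranspose_add, conjTranspose_sub, add_mul, sub_mul, mul_add, mul_sub]
    module
  have concavity := re_trace_rpow_add_rpow_le
    (posSemidef_conjTranspose_mul_self (x + y)).nonneg
    (posSemidef_conjTranspose_mul_self (x - y)).nonneg hr
  rw [parallelogram] at concavity
  simp only [schatten_eq_re_trace_rpow]
  refine concavity.trans ?_
  gcongr
  exact re_trace_rpow_add_le (posSemidef_conjTranspose_mul_self x).nonneg
    (posSemidef_conjTranspose_mul_self y).nonneg hr

/-- Clarkson inequalities for `0 < p ≤ 2`:
`2^{p-1}(‖x‖ₚᵖ + ‖y‖ₚᵖ) ≤ ‖x+y‖ₚᵖ + ‖x-y‖ₚᵖ ≤ 2(‖x‖ₚᵖ + ‖y‖ₚᵖ)`. -/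
theorem clarkson_le_two {n : ℕ} (x y : Matrix (Fin n) (Fin n) ℂ) (p : ℝ)
    (hp0 : 0 < p) (hp2 : p ≤ 2) :
    (2 : ℝ) ^ (p - 1) * (schatten p x + schatten p y)
        ≤ schatten p (x + y) + schatten p (x - y) ∧
    schatten p (x + y) + schatten p (x - y) ≤ 2 * (schatten p x + schatten p y) := by
  refine ⟨?_, schatten_add_add_schatten_sub_le x y hp0.le hp2⟩
  have h := schatten_add_add_schatten_sub_le (x + y) (x - y) hp0.le hp2
  rw [show x + y + (x - y) = (2 : ℂ) • x by module, show x + y - (x - y) = (2 : ℂ) • y by module,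
    schatten_smul, schatten_smul, Complex.norm_two] at h
  rw [Real.rpow_sub two_pos, Real.rpow_one]
  linarith
end
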